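/- Let N ≥ 2 be a prime and suppose {b_k}, {t_k} satisfy: |b_k| ≥ 2, b_k > (N−1)t_k ≥ N−1 for k ≥ m₀, s_i ≠ s_j for all i ≠ j (with s_k = τ_N(b_1⋯b_k) − τ_N(N t_k)), and there exists k₀ ≥ m₀ such that min{s_j : j > k} < max{s_j : j ≤ k} for all k ≥ k₀. Then τ_N(b_k) ≤ max{τ_N(t_n) : n ≥ 1} for every k ≥ k₀ + 1. -/

import Mathlib

lemma padicValInt_prod_aux (p : ℕ) [Fact p.Prime] (s : Finset ℕ) (f : ℕ → ℤ)
    (hf : ∀ i ∈ s, f i ≠ 0) :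
    padicValInt p (∏ i ∈ s, f i) = ∑ i ∈ s, padicValInt p (f i) := by
  classical
  induction s using Finset.induction_on with
  | empty => simp [padicValInt.one]
  | @insert a s' hx ih =>
    rw [Finset.prod_insert hx, Finset.sum_insert hx,
      padicValInt.mul (hf a (Finset.mem_insert_self a s'))
        (Finset.prod_ne_zero_iff.mpr fun i hi => hf i (Finset.mem_insert_of_mem hi)),
      ih fun i hi => hf i (Finset.mem_insert_of_mem hi)]

/-- Proposition 4.8 (ii): let `N` be a prime, `|b k| ≥ 2`, `{t k}` a bounded
sequence of positive integers, `b k > (N−1) t k` for `k ≥ m₀`,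
`s k = τ_N(b 0 ⋯ b k) − τ_N(N t k)` pairwise distinct (indices from `0`), and
suppose there is `k₀ ≥ m₀` such that for every `k ≥ k₀`,
`min{s_j : j > k} < max{s_j : j ≤ k}` (i.e. some later value of `s` lies below
some earlier one).  Then `τ_N(b k) ≤ max{τ_N(t n) : n}` for every `k ≥ k₀ + 1`. -/
theorem stmt19 (N : ℕ) (hN : N.Prime) (b t : ℕ → ℤ)
    (hb : ∀ k, 2 ≤ |b k|) (ht : ∀ k, 1 ≤ t k) (htbd : ∃ M : ℤ, ∀ k, t k ≤ M)
    (m₀ : ℕ) (hbt : ∀ k, m₀ ≤ k → ((N : ℤ) - 1) * t k < b k)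
    (s : ℕ → ℤ)
    (hs : ∀ k, s k = (padicValInt N (∏ i ∈ Finset.range (k + 1), b i) : ℤ)
        - (padicValInt N ((N : ℤ) * t k) : ℤ))
    (hdist : ∀ i j : ℕ, i ≠ j → s i ≠ s j)
    (k₀ : ℕ) (hk₀ : m₀ ≤ k₀)
    (hminmax : ∀ k, k₀ ≤ k → ∃ j, k < j ∧ ∃ j', j' ≤ k ∧ s j < s j') :
    ∀ k, k₀ + 1 ≤ k → ∃ n : ℕ, padicValInt N (b k) ≤ padicValInt N (t n) := by
  haveI : Fact N.Prime := ⟨hN⟩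
  intro k hk
  by_contra hcon
  push_neg at hcon
  have hbne : ∀ i, b i ≠ 0 := fun i => by
    have := hb i; intro h; rw [h] at this; simp at this
  have htne : ∀ i, t i ≠ 0 := fun i => by have := ht i; omega
  -- value of s
  have hsval : ∀ i, s i = (padicValInt N (∏ j ∈ Finset.range (i + 1), b j) : ℤ)
      - 1 - (padicValInt N (t i) : ℤ) := by
    intro i
    rw [hs i, padicValInt.mul (by exact_mod_cast hN.ne_zero) (htne i),
      padicValInt.self hN.one_lt]
    push_cast; ring
  obtain ⟨j, hj1, j', hj'1, hlt⟩ := hminmax (k - 1) (by omega)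
  have hkj : k ≤ j := by omega
  have hj'k : j' < k := by omega
  -- product split
  have hsplit : (∏ i ∈ Finset.range (j + 1), b i)
      = (∏ i ∈ Finset.range (j' + 1), b i) * ∏ i ∈ Finset.Ico (j' + 1) (j + 1), b i := by
    rw [Finset.range_eq_Ico, Finset.range_eq_Ico]
    exact (Finset.prod_Ico_consecutive b (m := 0) (n := j' + 1) (k := j + 1) (by omega) (by omega)).symm
  have hval : padicValInt N (∏ i ∈ Finset.range (j + 1), b i)
      = padicValInt N (∏ i ∈ Finset.range (j' + 1), b i)
        + ∑ i ∈ Finset.Ico (j' + 1) (j + 1), padicValInt N (b i) := by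
    rw [hsplit, padicValInt.mul
      (Finset.prod_ne_zero_iff.mpr fun i _ => hbne i)
      (Finset.prod_ne_zero_iff.mpr fun i _ => hbne i),
      padicValInt_prod_aux N _ b fun i _ => hbne i,
      padicValInt_prod_aux N _ b fun i _ => hbne i]
  have hmem : k ∈ Finset.Ico (j' + 1) (j + 1) := by
    simp only [Finset.mem_Ico]; omega
  have hsum : padicValInt N (b k) ≤ ∑ i ∈ Finset.Ico (j' + 1) (j + 1), padicValInt N (b i) :=
    Finset.single_le_sum (f := fun i => padicValInt N (b i)) (fun i _ => Nat.zero_le _) hmem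
  have hbig : padicValInt N (t j) < padicValInt N (b k) := hcon j
  have h1 := hsval j
  have h2 := hsval j'
  omega
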